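/- Let n, d ∈ ℕ with n ≥ 2 and d ≥ 1, let p ≥ 1, and equip the hypergrid [n]^d = {1,…,n}^d with the normalized ℓ_p metric dist(x,y) = ‖x−y‖_p / (d^{1/p}·n). Let 0 < ε₁ < ε₂ < 1 satisfy ε₂ > 2·d^{1/p}·ε₁, let H ⊆ [n]^d be connected in the hypergrid graph (vertices x,y adjacent iff ‖x−y‖₁ = 1), let h ∈ H, let k = ⌈ε₂·n/2⌉, and let B = {x ∈ [n]^d : ‖x−h‖_∞ = k}. Then: (i) if every pair of points of H is at dist-distance at most ε₁ (i.e. diam_dist(H) ≤ ε₁), then H ∩ B = ∅; and (ii) if some pair of points of H is at dist-distance at least ε₂ (i.e. diam_dist(H) ≥ ε₂), then H ∩ B ≠ ∅. -/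
import Mathlib

open scoped BigOperators

lemma my_discrete_ivt {α : Type*} {r : α → α → Prop} {P : α → Prop} (M : α → ℤ)
    (hstep : ∀ a b, r a b → P b ∧ M b ≤ M a + 1) {x y : α} (hPx : P x)
    (hxy : Relation.ReflTransGen r x y) {k : ℤ} (hx : M x ≤ k) (hy : k ≤ M y) :
    ∃ z, P z ∧ M z = k := by
  induction hxy with
  | refl => exact ⟨x, hPx, le_antisymm hx hy⟩
  | @tail c b hxc hcb ih =>
    by_cases hkc : k ≤ M c
    · exact ih hkc
    · obtain ⟨hPb, hMb⟩ := hstep c b hcb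
      exact ⟨b, hPb, by omega⟩

lemma my_coord_le_lpsum {ι : Type*} {s : Finset ι} (p : ℝ) (hp : 1 ≤ p)
    (f : ι → ℝ) (hf : ∀ i ∈ s, 0 ≤ f i) {i : ι} (hi : i ∈ s) :
    f i ≤ (∑ j ∈ s, f j ^ p) ^ (1 / p) := by
  have hp0 : (0:ℝ) < p := lt_of_lt_of_le one_pos hp
  have h1 : f i ^ p ≤ ∑ j ∈ s, f j ^ p :=
    Finset.single_le_sum (fun j hj => Real.rpow_nonneg (hf j hj) p) hi
  have h2 : (f i ^ p) ^ (1/p) ≤ (∑ j ∈ s, f j ^ p) ^ (1/p) :=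
    Real.rpow_le_rpow (Real.rpow_nonneg (hf i hi) p) h1 (by positivity)
  rw [one_div]
  rw [one_div, Real.rpow_rpow_inv (hf i hi) hp0.ne'] at h2
  exact h2

lemma my_lpsum_le {ι : Type*} {s : Finset ι} (p : ℝ) (hp : 1 ≤ p)
    (f : ι → ℝ) (C : ℝ) (hC : 0 ≤ C) (hf : ∀ i ∈ s, 0 ≤ f i)
    (hfC : ∀ i ∈ s, f i ≤ C) :
    (∑ j ∈ s, f j ^ p) ^ (1 / p) ≤ (s.card : ℝ) ^ (1 / p) * C := by
  have hp0 : (0:ℝ) < p := lt_of_lt_of_le one_pos hp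
  have h1 : ∑ j ∈ s, f j ^ p ≤ (s.card : ℝ) * C ^ p := by
    calc ∑ j ∈ s, f j ^ p ≤ ∑ j ∈ s, C ^ p :=
          Finset.sum_le_sum (fun j hj => Real.rpow_le_rpow (hf j hj) (hfC j hj) hp0.le)
      _ = (s.card : ℝ) * C ^ p := by rw [Finset.sum_const, nsmul_eq_mul]
  calc (∑ j ∈ s, f j ^ p) ^ (1/p)
      ≤ ((s.card : ℝ) * C ^ p) ^ (1/p) :=
        Real.rpow_le_rpow (Finset.sum_nonneg fun j hj => Real.rpow_nonneg (hf j hj) p) h1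
          (by positivity)
    _ = (s.card : ℝ) ^ (1/p) * C := by
        rw [Real.mul_rpow (by positivity) (Real.rpow_nonneg hC p), one_div,
          Real.rpow_rpow_inv hC hp0.ne']

/-- cell rejection dichotomy on the hypergrid.  Equip the
hypergrid `[n]^d = {1,…,n}^d ⊆ ℤ^d` with the normalized `ℓ_p` metric
`D(x,y) = ‖x−y‖_p/(d^{1/p}·n)`, `p ≥ 1`.  Let `0 < ε₁ < ε₂ < 1` with
`ε₂ > 2·d^{1/p}·ε₁`, let `H ⊆ [n]^d` be connected in the hypergrid graph
(adjacency: `‖x−y‖₁ = 1`), let `h ∈ H`, let `k = ⌈ε₂·n/2⌉`, and let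
`B = {x ∈ [n]^d : ‖x−h‖_∞ = k}`.  Then: (i) if `diam_D(H) ≤ ε₁` then `H ∩ B = ∅`;
(ii) if `diam_D(H) ≥ ε₂` then `H ∩ B ≠ ∅`. -/
theorem cell_rejection_connected_hypergrid
    (n d : ℕ) (hn : 2 ≤ n) (hd : 1 ≤ d) (p : ℝ) (hp : 1 ≤ p)
    (ε₁ ε₂ : ℝ) (hε₁ : 0 < ε₁) (hε₁₂ : ε₁ < ε₂) (hε₂ : ε₂ < 1)
    (hgap : 2 * (d : ℝ) ^ (1 / p) * ε₁ < ε₂)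
    (grid : Set (Fin d → ℤ))
    (hgrid : grid = {x | ∀ i, 1 ≤ x i ∧ x i ≤ (n : ℤ)})
    (D : (Fin d → ℤ) → (Fin d → ℤ) → ℝ)
    (hD : ∀ x y, D x y =
      (∑ i, ((|x i - y i| : ℤ) : ℝ) ^ p) ^ (1 / p) / ((d : ℝ) ^ (1 / p) * n))
    (H : Set (Fin d → ℤ)) (hHgrid : H ⊆ grid)
    (hconn : ∀ x ∈ H, ∀ y ∈ H,
      Relation.ReflTransGen
        (fun a b => a ∈ H ∧ b ∈ H ∧ (∑ i, |a i - b i|) = 1) x y)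
    (h : Fin d → ℤ) (hh : h ∈ H)
    (k : ℕ) (hk : k = ⌈ε₂ * n / 2⌉₊) :
    ((∀ x ∈ H, ∀ y ∈ H, D x y ≤ ε₁) →
        ∀ x ∈ H, ¬((∀ i, |x i - h i| ≤ (k : ℤ)) ∧ (∃ i, |x i - h i| = (k : ℤ)))) ∧
      ((∃ x ∈ H, ∃ y ∈ H, ε₂ ≤ D x y) →
        ∃ x ∈ H, (∀ i, |x i - h i| ≤ (k : ℤ)) ∧ (∃ i, |x i - h i| = (k : ℤ))) := by
  haveI : Nonempty (Fin d) := ⟨⟨0, hd⟩⟩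
  have hp0 : (0:ℝ) < p := lt_of_lt_of_le one_pos hp
  have hn0 : (0:ℝ) < n := by positivity
  have hd0 : (0:ℝ) < (d:ℝ) := by exact_mod_cast Nat.pos_of_ne_zero (by omega)
  have hdp : (0:ℝ) < (d:ℝ) ^ (1/p) := Real.rpow_pos_of_pos hd0 _
  have hkc : ε₂ * n / 2 ≤ (k : ℝ) := by rw [hk]; exact Nat.le_ceil _
  constructor
  · -- part (i)
    rintro hdiam x hx ⟨hle, i, hi⟩
    have hDxh := hdiam x hx h hh
    rw [hD] at hDxh
    have hcoord : ((|x i - h i| : ℤ) : ℝ) ≤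
        (∑ j, ((|x j - h j| : ℤ) : ℝ) ^ p) ^ (1 / p) :=
      my_coord_le_lpsum p hp (fun j => ((|x j - h j| : ℤ) : ℝ)) (fun j _ => by positivity) (Finset.mem_univ i)
    have hdivpos : (0:ℝ) < (d : ℝ) ^ (1/p) * n := by positivity
    have h1 : ((|x i - h i| : ℤ) : ℝ) ≤ ε₁ * ((d : ℝ) ^ (1/p) * n) := by
      have h4 : (∑ j, ((|x j - h j| : ℤ) : ℝ) ^ p) ^ (1 / p) ≤ ε₁ * ((d : ℝ) ^ (1/p) * n) :=
        (div_le_iff₀ hdivpos).mp hDxh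
      linarith
    have h2 : ((k:ℤ):ℝ) ≤ ε₁ * ((d : ℝ) ^ (1/p) * n) := by
      rw [hi] at h1; exact h1
    have h3 : ε₁ * ((d : ℝ) ^ (1/p) * n) < ε₂ * n / 2 := by nlinarith
    push_cast at h2
    linarith
  · -- part (ii)
    rintro ⟨x, hx, y, hy, hDxy⟩
    set M : (Fin d → ℤ) → ℤ := fun z => Finset.univ.sup' Finset.univ_nonempty
      (fun i => |z i - h i|) with hM
    have hMle : ∀ z i, |z i - h i| ≤ M z := fun z i =>
      Finset.le_sup' (fun j => |z j - h j|) (Finset.mem_univ i)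
    have hMnonneg : ∀ z, 0 ≤ M z := fun z =>
      le_trans (abs_nonneg _) (hMle z (Classical.arbitrary (Fin d)))
    -- step property
    have hstep : ∀ a b : Fin d → ℤ,
        (a ∈ H ∧ b ∈ H ∧ (∑ i, |a i - b i|) = 1) → b ∈ H ∧ M b ≤ M a + 1 := by
      rintro a b ⟨-, hbH, hsum⟩
      refine ⟨hbH, Finset.sup'_le _ _ fun i _ => ?_⟩
      have h1 : |a i - b i| ≤ ∑ j, |a j - b j| :=
        Finset.single_le_sum (f := fun j => |a j - b j|) (fun j _ => abs_nonneg _)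
          (Finset.mem_univ i)
      have h2 : |b i - h i| ≤ |a i - h i| + |a i - b i| := by
        have h3 := abs_add_le (a i - h i) (b i - a i)
        have h4 : a i - h i + (b i - a i) = b i - h i := by ring
        rw [h4, abs_sub_comm (b i) (a i)] at h3
        exact h3
      have := hMle a i
      omega
    -- D x y ≤ (M x + M y)/n
    have hsumM : ε₂ * n ≤ ((M x + M y : ℤ) : ℝ) := by
      rw [hD] at hDxy
      have hub : (∑ j, ((|x j - y j| : ℤ) : ℝ) ^ p) ^ (1 / p) ≤
          (d : ℝ) ^ (1/p) * ((M x + M y : ℤ) : ℝ) := by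
        have := my_lpsum_le (s := Finset.univ) p hp
          (fun j => ((|x j - y j| : ℤ) : ℝ)) ((M x + M y : ℤ) : ℝ)
          (by exact_mod_cast add_nonneg (hMnonneg x) (hMnonneg y))
          (fun j _ => by positivity)
          (fun j _ => by
            have h1 : |x j - y j| ≤ M x + M y := by
              have hx1 := hMle x j; have hy1 := hMle y j
              have h3 := abs_sub (x j - h j) (y j - h j)
              have h4 : x j - h j - (y j - h j) = x j - y j := by ring
              rw [h4] at h3
              omega
            show ((|x j - y j| : ℤ) : ℝ) ≤ ((M x + M y : ℤ) : ℝ)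
            exact_mod_cast h1)
        simpa [Finset.card_univ] using this
      have hDle : D x y ≤ ((M x + M y : ℤ) : ℝ) / n := by
        rw [hD]
        rw [div_le_div_iff₀ (by positivity) hn0]
        calc (∑ j, ((|x j - y j| : ℤ) : ℝ) ^ p) ^ (1 / p) * n
            ≤ ((d : ℝ) ^ (1/p) * ((M x + M y : ℤ) : ℝ)) * n := by
              apply mul_le_mul_of_nonneg_right hub hn0.le
          _ = ((M x + M y : ℤ) : ℝ) * ((d : ℝ) ^ (1/p) * n) := by ring
      rw [hD] at hDle
      have := le_trans hDxy hDle
      rw [le_div_iff₀ hn0] at this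
      linarith
    -- one of M x, M y is ≥ k
    have hbig : (k : ℤ) ≤ M x ∨ (k : ℤ) ≤ M y := by
      by_contra hcon
      push_neg at hcon
      obtain ⟨h1, h2⟩ := hcon
      have hkub : (k:ℝ) < ε₂ * n / 2 + 1 := by
        rw [hk]; exact Nat.ceil_lt_add_one (by nlinarith)
      have c1 : ((M x : ℤ) : ℝ) ≤ (k:ℝ) - 1 := by
        have h5 : M x ≤ (k:ℤ) - 1 := by omega
        have h6 : ((M x : ℤ) : ℝ) ≤ (((k:ℤ) - 1 : ℤ) : ℝ) := Int.cast_le.mpr h5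
        push_cast at h6; linarith
      have c2 : ((M y : ℤ) : ℝ) ≤ (k:ℝ) - 1 := by
        have h5 : M y ≤ (k:ℤ) - 1 := by omega
        have h6 : ((M y : ℤ) : ℝ) ≤ (((k:ℤ) - 1 : ℤ) : ℝ) := Int.cast_le.mpr h5
        push_cast at h6; linarith
      push_cast at hsumM
      linarith
    -- pick the far point
    obtain ⟨z, hzH, hzfar⟩ : ∃ z ∈ H, (k : ℤ) ≤ M z := by
      rcases hbig with h1 | h1
      · exact ⟨x, hx, h1⟩
      · exact ⟨y, hy, h1⟩
    have hMh : M h ≤ (k : ℤ) := by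
      have : M h ≤ 0 := Finset.sup'_le _ _ fun i _ => by simp
      omega
    obtain ⟨w, hwH, hwk⟩ := my_discrete_ivt M hstep hh (hconn h hh z hzH) hMh hzfar
    exact ⟨w, hwH, fun i => hwk ▸ hMle w i, by
      obtain ⟨i, -, hi⟩ := Finset.exists_mem_eq_sup' (Finset.univ_nonempty) (fun i => |w i - h i|)
      exact ⟨i, by rw [← hwk]; exact hi.symm⟩⟩
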